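/- Work in the Euclidean plane ℝ² with coordinates (x₁, x₂). Fix ρ > 0 and s ∈ ℝ with |s| > ρ. Let D_s be the closed disk with center (s, r_s) and radius r_s = (s² + ρ²)/(2ρ), and let B_ρ(0) be the open ball of radius ρ centered at the origin. Then the set W_s = {(x₁,x₂) : x₂ ≥ 0} \ (D_s ∪ B_ρ(0)) has exactly two connected components, exactly one of which is bounded and the other unbounded. -/

import Mathlib

/-!
Reflecting in the `x₂`-axis reduces to `s > ρ`. Since `∂D_s` passes through `(0, ρ)`, a point
of `W_s` with `0 ≤ x₁ ≤ s` has `x₂ < ρ` or `x₂ > s²/ρ`, so the disjoint open sets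
`{0 < x₁ < s, x₂ < s}` and `{x₁ < 0 ∨ x₁ > s ∨ x₂ > s}` cover `W_s`. The first piece of `W_s`
is bounded and the second contains a whole horizontal line. Both pieces are path-connected,
through explicit paths made of horizontal and vertical segments and an arc of `|x| = ρ`.
-/

open Set Metric

/-- The point of the Euclidean plane `ℝ²` with coordinates `(a, b)`. -/
noncomputable def pt (a b : ℝ) : EuclideanSpace ℝ (Fin 2) :=
  (EuclideanSpace.equiv (Fin 2) ℝ).symm ![a, b]

/-- The region `W_s`: the closed upper half-plane with the tangent disk `D_s`
(center `(s, (s²+ρ²)/(2ρ))`, radius `(s²+ρ²)/(2ρ)`) and the open ball `B_ρ(0)` removed. -/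
noncomputable def Wset (ρ s : ℝ) : Set (EuclideanSpace ℝ (Fin 2)) :=
  {p : EuclideanSpace ℝ (Fin 2) | 0 ≤ p 1} \
    (Metric.closedBall (pt s ((s ^ 2 + ρ ^ 2) / (2 * ρ))) ((s ^ 2 + ρ ^ 2) / (2 * ρ)) ∪
      Metric.ball (0 : EuclideanSpace ℝ (Fin 2)) ρ)

open Bornology

local notation "ℝ²" => EuclideanSpace ℝ (Fin 2)

section Components

variable {X Y : Type*}

def TwoComponentsOneBounded [PseudoMetricSpace X] (F : Set X) : Prop :=
  ∃ a ∈ F, ∃ b ∈ F,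
    connectedComponentIn F a ≠ connectedComponentIn F b ∧
    IsBounded (connectedComponentIn F a) ∧
    ¬ IsBounded (connectedComponentIn F b) ∧
    ∀ x ∈ F, connectedComponentIn F x = connectedComponentIn F a ∨
      connectedComponentIn F x = connectedComponentIn F b

theorem connectedComponentIn_eq_inter_of_isOpen [TopologicalSpace X] {F U V : Set X}
    (hU : IsOpen U) (hV : IsOpen V) (hUV : Disjoint U V) (hF : F ⊆ U ∪ V)
    (hFU : IsPreconnected (F ∩ U)) {x : X} (hx : x ∈ F ∩ U) :
    connectedComponentIn F x = F ∩ U := by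
  refine subset_antisymm (subset_inter (connectedComponentIn_subset F x) ?_)
    (hFU.subset_connectedComponentIn hx inter_subset_left)
  exact isPreconnected_connectedComponentIn.subset_left_of_subset_union hU hV hUV
    ((connectedComponentIn_subset F x).trans hF) ⟨x, mem_connectedComponentIn hx.1, hx.2⟩

theorem TwoComponentsOneBounded.of_isOpen_cover [PseudoMetricSpace X] {F U V : Set X}
    (hU : IsOpen U) (hV : IsOpen V) (hUV : Disjoint U V) (hF : F ⊆ U ∪ V)
    (hFU : IsConnected (F ∩ U)) (hFV : IsConnected (F ∩ V))
    (hbdd : IsBounded (F ∩ U)) (hunbdd : ¬ IsBounded (F ∩ V)) :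
    TwoComponentsOneBounded F := by
  have compU {x} := connectedComponentIn_eq_inter_of_isOpen (x := x) hU hV hUV hF
    hFU.isPreconnected
  have compV {x} := connectedComponentIn_eq_inter_of_isOpen (x := x) hV hU hUV.symm
    (hF.trans (union_comm U V).subset) hFV.isPreconnected
  obtain ⟨a, ha⟩ := hFU.nonempty
  obtain ⟨b, hb⟩ := hFV.nonempty
  refine ⟨a, ha.1, b, hb.1, ?_, ?_, ?_, ?_⟩
  · rw [compU ha, compV hb]
    exact fun h => hUV.notMem_of_mem_left ha.2 (h ▸ ha).2
  · rwa [compU ha]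
  · rwa [compV hb]
  · intro x hx
    rw [compU ha, compV hb]
    exact (hF hx).imp (fun h => compU ⟨hx, h⟩) (fun h => compV ⟨hx, h⟩)

theorem TwoComponentsOneBounded.image [PseudoMetricSpace X] [PseudoMetricSpace Y] {F : Set X}
    (h : TwoComponentsOneBounded F) (e : X ≃ᵢ Y) : TwoComponentsOneBounded (e '' F) := by
  obtain ⟨a, ha, b, hb, hab, hbdd, hunbdd, hcover⟩ := h
  have component_image (x) (hx : x ∈ F) :
      connectedComponentIn (e '' F) (e x) = e '' connectedComponentIn F x :=
    (e.toHomeomorph.image_connectedComponentIn hx).symm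
  have isBounded_image (C : Set X) : IsBounded (e '' C) ↔ IsBounded C := by
    rw [isBounded_iff_ediam_ne_top, isBounded_iff_ediam_ne_top, e.ediam_image]
  refine ⟨e a, mem_image_of_mem e ha, e b, mem_image_of_mem e hb, ?_, ?_, ?_, ?_⟩
  · rw [component_image a ha, component_image b hb]
    exact e.injective.image_injective.ne hab
  · rwa [component_image a ha, isBounded_image]
  · rwa [component_image b hb, isBounded_image]
  · rintro _ ⟨x, hx, rfl⟩
    rw [component_image x hx, component_image a ha, component_image b hb]
    exact (hcover x hx).imp (congrArg _) (congrArg _)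

theorem JoinedIn.of_mapsTo_uIcc [TopologicalSpace X] {F : Set X} {γ : ℝ → X}
    (hγ : Continuous γ) {a b : ℝ} (h : MapsTo γ (uIcc a b) F) : JoinedIn F (γ a) (γ b) :=
  (((convex_uIcc a b).isPathConnected nonempty_uIcc).image hγ).joinedIn _
    (mem_image_of_mem γ left_mem_uIcc) _ (mem_image_of_mem γ right_mem_uIcc) |>.mono h.image_subset

end Components

section Plane

@[simp] theorem pt_apply_zero (a b : ℝ) : pt a b 0 = a := rfl

@[simp] theorem pt_apply_one (a b : ℝ) : pt a b 1 = b := rfl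

theorem exists_eq_pt (x : ℝ²) : ∃ a b, x = pt a b :=
  ⟨x 0, x 1, by ext i; fin_cases i <;> rfl⟩

@[fun_prop]
theorem continuous_pt {α : Type*} [TopologicalSpace α] {f g : α → ℝ} (hf : Continuous f)
    (hg : Continuous g) : Continuous fun y => pt (f y) (g y) :=
  (EuclideanSpace.equiv (Fin 2) ℝ).symm.continuous.comp <|
    continuous_pi fun i => by fin_cases i <;> simpa

theorem dist_pt_pt (a b c d : ℝ) : dist (pt a b) (pt c d) = √((a - c) ^ 2 + (b - d) ^ 2) := by
  simp [EuclideanSpace.dist_eq, Fin.sum_univ_two, Real.dist_eq, sq_abs]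

theorem norm_pt (a b : ℝ) : ‖pt a b‖ = √(a ^ 2 + b ^ 2) := by
  simp [EuclideanSpace.norm_eq, Fin.sum_univ_two]

theorem abs_le_norm_pt (a b : ℝ) : |a| ≤ ‖pt a b‖ := by
  simpa using PiLp.norm_apply_le (pt a b) 0

noncomputable def negFst : ℝ² ≃ᵢ ℝ² where
  toFun x := pt (-x 0) (x 1)
  invFun x := pt (-x 0) (x 1)
  left_inv x := by ext i; fin_cases i <;> simp
  right_inv x := by ext i; fin_cases i <;> simp
  isometry_toFun := Isometry.of_dist_eq fun x y => by
    obtain ⟨a, b, rfl⟩ := exists_eq_pt x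
    obtain ⟨c, d, rfl⟩ := exists_eq_pt y
    simp only [pt_apply_zero, pt_apply_one, dist_pt_pt]
    ring_nf

end Plane

section Region

variable {ρ s a b t : ℝ}

/-- `x ∉ D_s` reads `r² < (a - s)² + (b - r)²` with `r = (s² + ρ²)/(2ρ)`; expanding and
multiplying by `ρ` removes `r`. -/
theorem pt_mem_Wset_iff (hρ : 0 < ρ) :
    pt a b ∈ Wset ρ s ↔
      0 ≤ b ∧ (s ^ 2 + ρ ^ 2) * b < ρ * ((a - s) ^ 2 + b ^ 2) ∧ ρ ^ 2 ≤ a ^ 2 + b ^ 2 := by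
  have hr : 2 * ρ * ((s ^ 2 + ρ ^ 2) / (2 * ρ)) = s ^ 2 + ρ ^ 2 := by field_simp
  simp only [Wset, mem_sdiff, mem_ofPred_eq, mem_union, mem_closedBall, mem_ball,
    dist_zero_right, norm_pt, dist_pt_pt, pt_apply_one, not_or, not_le, not_lt,
    Real.lt_sqrt (by positivity : 0 ≤ (s ^ 2 + ρ ^ 2) / (2 * ρ)), Real.le_sqrt' hρ]
  refine and_congr_right fun _ => and_congr_left fun _ => ?_
  constructor <;> intro h <;> nlinarith

theorem pt_neg_mem_Wset_neg_iff (hρ : 0 < ρ) :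
    pt (-a) b ∈ Wset ρ (-s) ↔ pt a b ∈ Wset ρ s := by
  simp only [pt_mem_Wset_iff hρ]
  ring_nf

theorem negFst_image_Wset (hρ : 0 < ρ) : negFst '' Wset ρ (-s) = Wset ρ s := by
  ext x
  obtain ⟨a, b, rfl⟩ := exists_eq_pt x
  rw [← IsometryEquiv.preimage_symm, mem_preimage]
  exact pt_neg_mem_Wset_neg_iff hρ

theorem pt_mem_Wset_left (hρ : 0 < ρ) (hs : 0 ≤ s) (h : pt a b ∈ Wset ρ s) (ha : a ≤ 0)
    (hta : t ≤ a) : pt t b ∈ Wset ρ s := by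
  rw [pt_mem_Wset_iff hρ] at h ⊢
  obtain ⟨hb, hD, hB⟩ := h
  have hst : (a - s) ^ 2 ≤ (t - s) ^ 2 := by nlinarith
  exact ⟨hb, by nlinarith [mul_le_mul_of_nonneg_left hst hρ.le], by nlinarith⟩

theorem pt_mem_Wset_right (hρ : 0 < ρ) (hs : 0 ≤ s) (h : pt a b ∈ Wset ρ s) (ha : s ≤ a)
    (hat : a ≤ t) : pt t b ∈ Wset ρ s := by
  rw [pt_mem_Wset_iff hρ] at h ⊢
  obtain ⟨hb, hD, hB⟩ := h
  have hst : (a - s) ^ 2 ≤ (t - s) ^ 2 := by nlinarith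
  exact ⟨hb, by nlinarith [mul_le_mul_of_nonneg_left hst hρ.le], by nlinarith⟩

theorem pt_mem_Wset_above (hρ : 0 < ρ) (h : pt a b ∈ Wset ρ s)
    (hb : s ^ 2 + ρ ^ 2 ≤ 2 * ρ * b) (hbt : b ≤ t) : pt a t ∈ Wset ρ s := by
  rw [pt_mem_Wset_iff hρ] at h ⊢
  obtain ⟨hb0, hD, hB⟩ := h
  have hρt := mul_le_mul_of_nonneg_left hbt hρ.le
  have hsum : 0 ≤ ρ * t + ρ * b - (s ^ 2 + ρ ^ 2) := by linarith
  exact ⟨by linarith, by nlinarith [mul_nonneg (sub_nonneg.2 hbt) hsum], by nlinarith⟩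

theorem pt_mem_Wset_below (hρ : 0 < ρ) (h : pt a b ∈ Wset ρ s)
    (hb : 2 * ρ * b ≤ s ^ 2 + ρ ^ 2) (ht : 0 ≤ t) (htb : t ≤ b) (hB : ρ ^ 2 ≤ a ^ 2 + t ^ 2) :
    pt a t ∈ Wset ρ s := by
  rw [pt_mem_Wset_iff hρ] at h ⊢
  obtain ⟨-, hD, -⟩ := h
  have hρt := mul_le_mul_of_nonneg_left htb hρ.le
  have hsum : 0 ≤ s ^ 2 + ρ ^ 2 - ρ * t - ρ * b := by linarith
  exact ⟨ht, by nlinarith [mul_nonneg (sub_nonneg.2 htb) hsum], hB⟩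

theorem pt_mem_Wset_of_far (hρ : 0 < ρ) (hs : ρ ≤ s)
    (ha : (s ^ 2 + ρ ^ 2) ^ 2 ≤ (ρ * (a - s)) ^ 2) (hb : 0 ≤ b) : pt a b ∈ Wset ρ s := by
  rw [pt_mem_Wset_iff hρ]
  refine ⟨hb, ?_, ?_⟩
  · have key : 0 < (ρ * (a - s)) ^ 2 + (ρ * b) ^ 2 - (s ^ 2 + ρ ^ 2) * (ρ * b) := by
      nlinarith [sq_nonneg (2 * (ρ * b) - (s ^ 2 + ρ ^ 2)),
        pow_pos (by positivity : 0 < s ^ 2 + ρ ^ 2) 2]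
    nlinarith
  · have hsρ : (ρ * (s + ρ)) ^ 2 ≤ (s ^ 2 + ρ ^ 2) ^ 2 :=
      pow_le_pow_left₀ (mul_nonneg hρ.le (by linarith)) (by nlinarith) 2
    have has : (s + ρ) ^ 2 ≤ (a - s) ^ 2 := by
      have := hsρ.trans ha
      rw [mul_pow, mul_pow] at this
      exact le_of_mul_le_mul_left this (by positivity)
    rcases le_or_gt 0 (a + ρ) with h | h <;> nlinarith

theorem pt_mem_Wset_axis (hρ : 0 < ρ) (hρt : ρ ≤ t) (hts : t < s) : pt t 0 ∈ Wset ρ s :=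
  (pt_mem_Wset_iff hρ).2
    ⟨le_rfl, by nlinarith [mul_pos hρ (pow_pos (sub_pos.2 hts) 2)], by nlinarith⟩

theorem pt_mem_Wset_of_high (hρ : 0 < ρ) (hb : s ^ 2 + ρ ^ 2 < ρ * b) : pt a b ∈ Wset ρ s := by
  rw [pt_mem_Wset_iff hρ]
  have hb0 : 0 < b := by nlinarith
  have hbρ : ρ < b := by nlinarith
  exact ⟨hb0.le, by nlinarith, by nlinarith⟩

theorem lt_or_lt_of_pt_mem_Wset (hρ : 0 < ρ) (ha : 0 ≤ a) (has : a ≤ s)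
    (h : pt a b ∈ Wset ρ s) : b < ρ ∨ s ^ 2 < ρ * b := by
  rw [pt_mem_Wset_iff hρ] at h
  obtain ⟨hb, hD, -⟩ := h
  have hs : (a - s) ^ 2 ≤ s ^ 2 := by nlinarith
  by_contra! hcon
  nlinarith [mul_nonneg (sub_nonneg.2 hcon.1) (sub_nonneg.2 hcon.2),
    mul_le_mul_of_nonneg_left hs hρ.le]

/-- On the upper arc of the circle `|x| = ρ`, the points outside `D_s` are those to the right
of the second intersection point of the two circles. -/
theorem pt_arc_mem_Wset_iff (hρ : 0 < ρ) (hs : ρ < s) (ht : 0 < t) (htρ : t ≤ ρ) :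
    pt t √(ρ ^ 2 - t ^ 2) ∈ Wset ρ s ↔
      4 * s * ρ ^ 2 * (s ^ 2 + ρ ^ 2) < ((s ^ 2 + ρ ^ 2) ^ 2 + 4 * s ^ 2 * ρ ^ 2) * t := by
  have hsq : √(ρ ^ 2 - t ^ 2) ^ 2 = ρ ^ 2 - t ^ 2 :=
    Real.sq_sqrt (sub_nonneg.2 (pow_le_pow_left₀ ht.le htρ 2))
  have hpos : 0 < ρ * (s ^ 2 + ρ ^ 2 - 2 * s * t) := mul_pos hρ (by nlinarith)
  have e : ρ * ((t - s) ^ 2 + √(ρ ^ 2 - t ^ 2) ^ 2) = ρ * (s ^ 2 + ρ ^ 2 - 2 * s * t) := by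
    rw [hsq]; ring
  rw [pt_mem_Wset_iff hρ, e, ← pow_lt_pow_iff_left₀ (by positivity) hpos.le two_ne_zero,
    mul_pow, hsq]
  constructor
  · rintro ⟨-, h, -⟩
    nlinarith
  · intro h
    exact ⟨Real.sqrt_nonneg _, by nlinarith, by linarith⟩

theorem pt_arc_mem_Wset_right (hρ : 0 < ρ) (hs : ρ < s) (ha : 0 < a) (hat : a ≤ t)
    (htρ : t ≤ ρ) (h : pt a √(ρ ^ 2 - a ^ 2) ∈ Wset ρ s) : pt t √(ρ ^ 2 - t ^ 2) ∈ Wset ρ s :=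
  (pt_arc_mem_Wset_iff hρ hs (ha.trans_le hat) htρ).2 <|
    ((pt_arc_mem_Wset_iff hρ hs ha (hat.trans htρ)).1 h).trans_le (by gcongr)

end Region

section Split

variable {ρ s : ℝ}

def innerBox (s : ℝ) : Set ℝ² := {x | 0 < x 0 ∧ x 0 < s ∧ x 1 < s}

def outerBox (s : ℝ) : Set ℝ² := {x | x 0 < 0 ∨ s < x 0 ∨ s < x 1}

theorem pt_mem_innerBox {a b : ℝ} : pt a b ∈ innerBox s ↔ 0 < a ∧ a < s ∧ b < s := Iff.rfl

theorem pt_mem_outerBox {a b : ℝ} : pt a b ∈ outerBox s ↔ a < 0 ∨ s < a ∨ s < b := Iff.rfl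

theorem isOpen_innerBox (s : ℝ) : IsOpen (innerBox s) := by
  have h₀ : Continuous fun x : ℝ² => x 0 := by fun_prop
  have h₁ : Continuous fun x : ℝ² => x 1 := by fun_prop
  exact (isOpen_lt continuous_const h₀).inter <|
    (isOpen_lt h₀ continuous_const).inter (isOpen_lt h₁ continuous_const)

theorem isOpen_outerBox (s : ℝ) : IsOpen (outerBox s) := by
  have h₀ : Continuous fun x : ℝ² => x 0 := by fun_prop
  have h₁ : Continuous fun x : ℝ² => x 1 := by fun_prop
  exact (isOpen_lt h₀ continuous_const).union <|
    (isOpen_lt continuous_const h₀).union (isOpen_lt continuous_const h₁)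

theorem disjoint_innerBox_outerBox (s : ℝ) : Disjoint (innerBox s) (outerBox s) :=
  disjoint_left.2 fun _ ⟨h₀, hs₀, hs₁⟩ h => by rcases h with h | h | h <;> linarith

theorem Wset_subset_innerBox_union_outerBox (hρ : 0 < ρ) (hs : ρ < s) :
    Wset ρ s ⊆ innerBox s ∪ outerBox s := by
  intro x hx
  obtain ⟨a, b, rfl⟩ := exists_eq_pt x
  rw [mem_union, pt_mem_innerBox, pt_mem_outerBox]
  rcases lt_or_ge a 0 with ha | ha
  · exact Or.inr (Or.inl ha)
  rcases lt_or_ge s a with has | has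
  · exact Or.inr (Or.inr (Or.inl has))
  rcases lt_or_lt_of_pt_mem_Wset hρ ha has hx with hb | hb
  · obtain ⟨hb0, hD, hB⟩ := (pt_mem_Wset_iff hρ).1 hx
    refine Or.inl ⟨?_, ?_, by linarith⟩
    · by_contra! ha'
      nlinarith
    · by_contra! ha'
      obtain rfl : a = s := le_antisymm has ha'
      nlinarith [mul_le_mul_of_nonneg_left hb.le (mul_nonneg hρ.le hb0),
        mul_nonneg hb0 (sq_nonneg a)]
  · exact Or.inr (Or.inr (Or.inr (by nlinarith)))

theorem isBounded_Wset_inter_innerBox (ρ s : ℝ) : IsBounded (Wset ρ s ∩ innerBox s) := by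
  refine isBounded_iff_forall_norm_le.2 ⟨2 * s, fun x hx => ?_⟩
  obtain ⟨a, b, rfl⟩ := exists_eq_pt x
  obtain ⟨hW, hbox⟩ := hx
  obtain ⟨ha0, has, hbs⟩ := pt_mem_innerBox.1 hbox
  have hb : 0 ≤ b := hW.1
  rw [norm_pt, Real.sqrt_le_left (by linarith)]
  nlinarith

theorem pt_mem_Wset_inter_outerBox_of_high (hρ : 0 < ρ) {a b : ℝ}
    (hb : 2 * (s ^ 2 + ρ ^ 2) ≤ ρ * b) : pt a b ∈ Wset ρ s ∩ outerBox s := by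
  refine ⟨pt_mem_Wset_of_high hρ (by nlinarith), pt_mem_outerBox.2 (Or.inr (Or.inr ?_))⟩
  by_contra! h
  nlinarith [sq_nonneg (2 * s - ρ), mul_le_mul_of_nonneg_left h hρ.le]

theorem not_isBounded_Wset_inter_outerBox (hρ : 0 < ρ) :
    ¬ IsBounded (Wset ρ s ∩ outerBox s) := by
  intro hbdd
  obtain ⟨C, hC⟩ := isBounded_iff_forall_norm_le.1 hbdd
  have high : 2 * (s ^ 2 + ρ ^ 2) ≤ ρ * (2 * (s ^ 2 + ρ ^ 2) / ρ) :=
    (mul_div_cancel₀ _ hρ.ne').ge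
  have h := (abs_le_norm_pt _ _).trans
    (hC _ (pt_mem_Wset_inter_outerBox_of_high (a := |C| + 1) hρ high))
  rw [abs_of_pos (by positivity)] at h
  linarith [le_abs_self C]

/-- The graph of `t ↦ √(ρ² - t²)` follows the circle `|x| = ρ` up to `t = ρ` and the axis after
it, because `Real.sqrt` vanishes on negative numbers. -/
theorem pt_graph_mem_Wset_inter_innerBox (hρ : 0 < ρ) (hs : ρ < s) {a t : ℝ} (ha0 : 0 < a)
    (has : a < s) (ha : pt a √(ρ ^ 2 - a ^ 2) ∈ Wset ρ s) (ht : t ∈ uIcc a ρ) :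
    pt t √(ρ ^ 2 - t ^ 2) ∈ Wset ρ s ∩ innerBox s := by
  have ht0 : 0 < t := (lt_min ha0 hρ).trans_le ht.1
  have hts : t < s := ht.2.trans_lt (max_lt has hs)
  have hle : √(ρ ^ 2 - t ^ 2) ≤ ρ := (Real.sqrt_le_left hρ.le).2 (by nlinarith)
  refine ⟨?_, ht0, hts, hle.trans_lt hs⟩
  rcases le_or_gt ρ t with hρt | htρ
  · rw [Real.sqrt_eq_zero'.2 (by nlinarith)]
    exact pt_mem_Wset_axis hρ hρt hts
  · have hat : a ≤ t := by
      rcases mem_uIcc.1 ht with h | h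
      · exact h.1
      · linarith [h.1]
    exact pt_arc_mem_Wset_right hρ hs ha0 hat htρ.le ha

/-- Every point goes straight down to the circle `|x| = ρ` or to the axis, and then along the
graph of `t ↦ √(ρ² - t²)` to `(ρ, 0)`. -/
theorem isPathConnected_Wset_inter_innerBox (hρ : 0 < ρ) (hs : ρ < s) :
    IsPathConnected (Wset ρ s ∩ innerBox s) := by
  refine ⟨pt ρ 0, ⟨pt_mem_Wset_axis hρ le_rfl hs, pt_mem_innerBox.2 ⟨hρ, hs, hρ.trans hs⟩⟩,
    fun {x} hx => JoinedIn.symm ?_⟩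
  obtain ⟨a, b, rfl⟩ := exists_eq_pt x
  obtain ⟨hW, hbox⟩ := hx
  obtain ⟨ha0, has, hbs⟩ := pt_mem_innerBox.1 hbox
  have hb : 0 ≤ b := hW.1
  have hB : ρ ^ 2 ≤ a ^ 2 + b ^ 2 := ((pt_mem_Wset_iff hρ).1 hW).2.2
  have hfa : √(ρ ^ 2 - a ^ 2) ≤ b := (Real.sqrt_le_left hb).2 (by linarith)
  have down : ∀ t ∈ Icc √(ρ ^ 2 - a ^ 2) b, pt a t ∈ Wset ρ s ∩ innerBox s := by
    intro t ht
    have ht0 : 0 ≤ t := (Real.sqrt_nonneg _).trans ht.1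
    have hB' : ρ ^ 2 ≤ a ^ 2 + t ^ 2 := by
      have := pow_le_pow_left₀ (Real.sqrt_nonneg _) ht.1 2
      rw [Real.sq_sqrt'] at this
      linarith [le_max_left (ρ ^ 2 - a ^ 2) 0]
    exact ⟨pt_mem_Wset_below hρ hW (by nlinarith) ht0 ht.2 hB', ha0, has, ht.2.trans_lt hbs⟩
  have h := (JoinedIn.of_mapsTo_uIcc (γ := fun t => pt a t) (a := b) (b := √(ρ ^ 2 - a ^ 2))
    (by fun_prop) fun t ht => down t (uIcc_of_ge hfa ▸ ht)).trans
    (JoinedIn.of_mapsTo_uIcc (γ := fun t => pt t √(ρ ^ 2 - t ^ 2)) (by fun_prop)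
      fun t => pt_graph_mem_Wset_inter_innerBox hρ hs ha0 has (down _ ⟨le_rfl, hfa⟩).1)
  simpa using h

theorem exists_far_joinedIn_Wset_inter_outerBox (hρ : 0 < ρ) (hs : ρ < s) {a b : ℝ}
    (h : pt a b ∈ Wset ρ s) (ha : a < 0 ∨ s < a) :
    ∃ c, (c < 0 ∨ s < c) ∧ (s ^ 2 + ρ ^ 2) ^ 2 ≤ (ρ * (c - s)) ^ 2 ∧
      JoinedIn (Wset ρ s ∩ outerBox s) (pt a b) (pt c b) := by
  obtain ⟨K, hK⟩ : ∃ K, ρ * K = s ^ 2 + ρ ^ 2 := ⟨_, mul_div_cancel₀ _ hρ.ne'⟩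
  rcases ha with ha | ha
  · refine ⟨min a (s - K), .inl ((min_le_left _ _).trans_lt ha), ?_,
      JoinedIn.of_mapsTo_uIcc (γ := fun t => pt t b) (by fun_prop) fun t ht => ?_⟩
    · have : ρ * (min a (s - K) - s) ≤ -(s ^ 2 + ρ ^ 2) := by
        nlinarith [min_le_right a (s - K)]
      nlinarith
    · rw [uIcc_of_ge (min_le_left _ _)] at ht
      exact ⟨pt_mem_Wset_left hρ (by linarith) h ha.le ht.2,
        pt_mem_outerBox.2 (.inl (ht.2.trans_lt ha))⟩
  · refine ⟨max a (s + K), .inr (ha.trans_le (le_max_left _ _)), ?_,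
      JoinedIn.of_mapsTo_uIcc (γ := fun t => pt t b) (by fun_prop) fun t ht => ?_⟩
    · have : s ^ 2 + ρ ^ 2 ≤ ρ * (max a (s + K) - s) := by
        nlinarith [le_max_right a (s + K)]
      nlinarith
    · rw [uIcc_of_le (le_max_left _ _)] at ht
      exact ⟨pt_mem_Wset_right hρ (by linarith) h ha.le ht.1,
        pt_mem_outerBox.2 (.inr (.inl (ha.trans_le ht.1)))⟩

/-- Points left of the axis move left and points right of `s` move right, until they reach a
vertical line `x₁ = s ∓ (s² + ρ²)/ρ` that misses `D_s`; the remaining points lie above `D_s` and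
move up. All of them then reach `(0, 2(s² + ρ²)/ρ)` along a horizontal line. -/
theorem isPathConnected_Wset_inter_outerBox (hρ : 0 < ρ) (hs : ρ < s) :
    IsPathConnected (Wset ρ s ∩ outerBox s) := by
  obtain ⟨K, hK⟩ : ∃ K, ρ * K = s ^ 2 + ρ ^ 2 := ⟨_, mul_div_cancel₀ _ hρ.ne'⟩
  have hK0 : 0 < K := pos_of_mul_pos_right (hK ▸ by positivity) hρ.le
  have high {c t : ℝ} (ht : 2 * K ≤ t) : pt c t ∈ Wset ρ s ∩ outerBox s :=
    pt_mem_Wset_inter_outerBox_of_high hρ (by nlinarith)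
  have along_top (c : ℝ) : JoinedIn (Wset ρ s ∩ outerBox s) (pt c (2 * K)) (pt 0 (2 * K)) :=
    JoinedIn.of_mapsTo_uIcc (γ := fun t => pt t (2 * K)) (by fun_prop) fun _ _ => high le_rfl
  refine ⟨pt 0 (2 * K), high le_rfl, fun {x} hx => JoinedIn.symm ?_⟩
  obtain ⟨a, b, rfl⟩ := exists_eq_pt x
  obtain ⟨hW, hO⟩ := hx
  have hb : 0 ≤ b := hW.1
  by_cases hfar : a < 0 ∨ s < a
  · obtain ⟨c, hc, hcK, hjoin⟩ := exists_far_joinedIn_Wset_inter_outerBox hρ hs hW hfar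
    refine hjoin.trans <| .trans (JoinedIn.of_mapsTo_uIcc (γ := fun t => pt c t) (b := 2 * K)
      (by fun_prop) fun t ht => ⟨pt_mem_Wset_of_far hρ hs.le hcK ?_, pt_mem_outerBox.2 ?_⟩)
      (along_top c)
    · exact (le_min hb (by positivity)).trans ht.1
    · exact hc.imp_right .inl
  push Not at hfar
  have hbs : s < b := by rcases pt_mem_outerBox.1 hO with h | h | h <;> linarith
  have hsb : s ^ 2 < ρ * b :=
    (lt_or_lt_of_pt_mem_Wset hρ hfar.1 hfar.2 hW).resolve_left (by linarith)
  refine .trans (JoinedIn.of_mapsTo_uIcc (γ := fun t => pt a t) (a := b) (b := 2 * K)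
    (by fun_prop) fun t ht => ?_) (along_top a)
  rcases min_le_iff.1 ht.1 with hbt | hKt
  · exact ⟨pt_mem_Wset_above hρ hW (by nlinarith) hbt,
      pt_mem_outerBox.2 (.inr (.inr (hbs.trans_le hbt)))⟩
  · exact high hKt

theorem twoComponentsOneBounded_Wset (hρ : 0 < ρ) (hs : ρ < s) :
    TwoComponentsOneBounded (Wset ρ s) :=
  .of_isOpen_cover (isOpen_innerBox s) (isOpen_outerBox s) (disjoint_innerBox_outerBox s)
    (Wset_subset_innerBox_union_outerBox hρ hs)
    (isPathConnected_Wset_inter_innerBox hρ hs).isConnected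
    (isPathConnected_Wset_inter_outerBox hρ hs).isConnected
    (isBounded_Wset_inter_innerBox ρ s) (not_isBounded_Wset_inter_outerBox hρ)

end Split

/-- For `ρ > 0` and `|s| > ρ`, the set `W_s` has exactly two connected components,
exactly one of which is bounded and the other unbounded. -/
theorem Wset_two_components (ρ s : ℝ) (hρ : 0 < ρ) (hs : ρ < |s|) :
    ∃ a ∈ Wset ρ s, ∃ b ∈ Wset ρ s,
      connectedComponentIn (Wset ρ s) a ≠ connectedComponentIn (Wset ρ s) b ∧
      Bornology.IsBounded (connectedComponentIn (Wset ρ s) a) ∧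
      ¬ Bornology.IsBounded (connectedComponentIn (Wset ρ s) b) ∧
      ∀ x ∈ Wset ρ s,
        connectedComponentIn (Wset ρ s) x = connectedComponentIn (Wset ρ s) a ∨
        connectedComponentIn (Wset ρ s) x = connectedComponentIn (Wset ρ s) b := by
  show TwoComponentsOneBounded (Wset ρ s)
  rcases lt_abs.1 hs with hs | hs
  · exact twoComponentsOneBounded_Wset hρ hs
  · rw [← negFst_image_Wset hρ]
    exact (twoComponentsOneBounded_Wset hρ hs).image negFst
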